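/- arXiv:1912.08799 — 3 statements merged into one kernel-verified Lean document; each statement's English description precedes it below -/
import Mathlib

section
/- The GRL density integrates to one: for all real λ ≥ 2 and α > 0, the improper integral of f over (0, ∞) equals 1, i.e. ∫_{0}^{∞} (α/(λ(λ−1))) · t^(α−1) · (λ + t^α/λ − 2) · exp(−t^α/λ) dt = 1. -/
/-! The density is `-S'` for the survival function `S t = (1 + t^α/(λ(λ-1))) exp (-t^α/λ)`,
which falls from `S 0 = 1` to `0` at infinity. For `λ ≥ 2` the density is nonnegative, so the
improper fundamental theorem of calculus applies without a separate integrability argument and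
gives `∫ f = S 0 - lim S = 1`. -/

open Real MeasureTheory Filter Set Topology

noncomputable def grlDensity (lam α t : ℝ) : ℝ :=
  α / (lam * (lam - 1)) * t ^ (α - 1) * (lam + t ^ α / lam - 2) * exp (-(t ^ α / lam))

noncomputable def grlSurvival (lam α t : ℝ) : ℝ :=
  (1 + t ^ α / (lam * (lam - 1))) * exp (-(t ^ α / lam))

theorem grlSurvival_zero (lam : ℝ) {α : ℝ} (hα : 0 < α) : grlSurvival lam α 0 = 1 := by
  simp [grlSurvival, zero_rpow hα.ne']

theorem continuousWithinAt_grlSurvival_zero (lam : ℝ) {α : ℝ} (hα : 0 < α) :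
    ContinuousWithinAt (grlSurvival lam α) (Ici 0) 0 := by
  have hpow : ContinuousAt (fun t : ℝ => t ^ α) 0 := continuousAt_rpow_const 0 α (Or.inr hα.le)
  unfold grlSurvival
  exact ((continuousAt_const.add (hpow.div_const _)).mul
    (hpow.div_const _).neg.rexp).continuousWithinAt

theorem hasDerivAt_grlSurvival {lam : ℝ} (hlam₀ : lam ≠ 0) (hlam₁ : lam - 1 ≠ 0) (α : ℝ)
    {t : ℝ} (ht : t ≠ 0) : HasDerivAt (grlSurvival lam α) (-grlDensity lam α t) t := by
  have hpow : HasDerivAt (fun t : ℝ => t ^ α) (α * t ^ (α - 1)) t :=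
    hasDerivAt_rpow_const (Or.inl ht)
  refine (((hpow.div_const _).const_add 1).mul (hpow.div_const lam).neg.exp).congr_deriv ?_
  simp only [grlDensity, Pi.neg_apply]
  field_simp
  ring

theorem tendsto_affine_mul_exp_neg_atTop (a b : ℝ) :
    Tendsto (fun v => (a + b * v) * exp (-v)) atTop (𝓝 0) := by
  have hexp : Tendsto (fun v => exp (-v)) atTop (𝓝 0) := tendsto_exp_neg_atTop_nhds_zero
  have hmul : Tendsto (fun v => v * exp (-v)) atTop (𝓝 0) := by
    simpa using tendsto_pow_mul_exp_neg_atTop_nhds_zero 1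
  simpa [add_mul, mul_assoc] using (hexp.const_mul a).add (hmul.const_mul b)

theorem tendsto_grlSurvival_atTop {lam α : ℝ} (hlam : 0 < lam) (hα : 0 < α) :
    Tendsto (grlSurvival lam α) atTop (𝓝 0) := by
  have hv : Tendsto (fun t : ℝ => t ^ α / lam) atTop atTop :=
    (tendsto_rpow_atTop hα).atTop_div_const hlam
  refine ((tendsto_affine_mul_exp_neg_atTop 1 (lam - 1)⁻¹).comp hv).congr fun t => ?_
  simp only [Function.comp, grlSurvival, mul_inv, div_eq_mul_inv]
  ring

theorem grlDensity_nonneg {lam α t : ℝ} (hlam : 2 ≤ lam) (hα : 0 ≤ α) (ht : 0 ≤ t) :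
    0 ≤ grlDensity lam α t := by
  have hratio : 0 ≤ t ^ α / lam := div_nonneg (rpow_nonneg ht α) (by linarith)
  have hshape : 0 ≤ lam + t ^ α / lam - 2 := by linarith
  have hcoeff : 0 ≤ α / (lam * (lam - 1)) := div_nonneg hα (by nlinarith)
  have hpow : 0 ≤ t ^ (α - 1) := rpow_nonneg ht (α - 1)
  unfold grlDensity
  positivity

/-- The GRL density integrates to one. -/
theorem grl_density_integrates_to_one (lam α : ℝ) (hlam : 2 ≤ lam) (hα : 0 < α) :
    ∫ t in Set.Ioi (0 : ℝ),
      (α / (lam * (lam - 1))) * t ^ (α - 1) * (lam + t ^ α / lam - 2) *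
        Real.exp (-(t ^ α / lam)) = 1 := by
  have hlam₀ : 0 < lam := by linarith
  have hlam₁ : lam - 1 ≠ 0 := by linarith
  have hftc := integral_Ioi_of_hasDerivAt_of_nonneg (g := -grlSurvival lam α)
    (continuousWithinAt_grlSurvival_zero lam hα).neg
    (fun t ht => by simpa using (hasDerivAt_grlSurvival hlam₀.ne' hlam₁ α (ne_of_gt ht)).neg)
    (fun t ht => grlDensity_nonneg hlam hα.le (le_of_lt ht))
    (neg_zero (G := ℝ) ▸ (tendsto_grlSurvival_atTop hlam₀ hα).neg)
  rw [Pi.neg_apply, grlSurvival_zero lam hα, sub_neg_eq_add, zero_add] at hftc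
  exact hftc
end

section
/- For every real t ≥ 0, the cumulative distribution function of the GRL distribution satisfies ∫_{0}^{t} f(u) du = 1 − (1/(λ−1)) · (λ − 1 + t^α/λ) · exp(−t^α/λ). -/
open Real MeasureTheory

/-! The survival function `S` is an explicit antiderivative of `-f` on `(0, ∞)`, continuous up to
`0` with `S 0 = 1`, while `f` is integrable near `0` because `u ^ (α - 1)` is when `α > 0`.
The fundamental theorem of calculus then gives `∫₀ᵗ f = S 0 - S t = 1 - S t`. -/

noncomputable section

namespace GRL

variable (lam α : ℝ)

def density (u : ℝ) : ℝ :=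
  (α / (lam * (lam - 1))) * u ^ (α - 1) * (lam + u ^ α / lam - 2) * exp (-(u ^ α / lam))

def survival (t : ℝ) : ℝ :=
  (1 / (lam - 1)) * (lam - 1 + t ^ α / lam) * exp (-(t ^ α / lam))

variable {lam α}

theorem survival_zero (hlam : lam ≠ 1) (hα : α ≠ 0) : survival lam α 0 = 1 := by
  have : lam - 1 ≠ 0 := sub_ne_zero.mpr hlam
  simp [survival, zero_rpow hα, this]

theorem continuous_survival (hα : 0 ≤ α) : Continuous (survival lam α) := by
  have := continuous_rpow_const hα
  unfold survival
  fun_prop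

theorem hasDerivAt_survival {x : ℝ} (hx : x ≠ 0) :
    HasDerivAt (survival lam α) (-density lam α x) x := by
  have hpow : HasDerivAt (fun u : ℝ => u ^ α / lam) (α * x ^ (α - 1) / lam) x :=
    (hasDerivAt_rpow_const (Or.inl hx)).div_const lam
  have hexp : HasDerivAt (fun u : ℝ => exp (-(u ^ α / lam)))
      (exp (-(x ^ α / lam)) * -(α * x ^ (α - 1) / lam)) x :=
    hpow.neg.exp
  have hS : survival lam α =
      fun u => 1 / (lam - 1) * ((lam - 1 + u ^ α / lam) * exp (-(u ^ α / lam))) := by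
    funext u
    simp only [survival]
    ring
  rw [hS]
  refine (((hpow.const_add (lam - 1)).mul hexp).const_mul (1 / (lam - 1))).congr_deriv ?_
  rw [density, ← div_div]
  ring

theorem intervalIntegrable_density (hα : 0 < α) (a b : ℝ) :
    IntervalIntegrable (density lam α) volume a b := by
  have hsing : IntervalIntegrable (fun u : ℝ => u ^ (α - 1)) volume a b :=
    intervalIntegral.intervalIntegrable_rpow' (by linarith)
  have hcont : Continuous fun u : ℝ =>
      (α / (lam * (lam - 1))) * (lam + u ^ α / lam - 2) * exp (-(u ^ α / lam)) := by
    have := continuous_rpow_const hα.le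
    fun_prop
  refine (hsing.continuousOn_mul hcont.continuousOn).congr fun u _ => ?_
  simp only [density]
  ring

theorem integral_density (hα : 0 < α) {t : ℝ} (ht : 0 ≤ t) :
    ∫ u in (0 : ℝ)..t, density lam α u = survival lam α 0 - survival lam α t := by
  have hneg : ∫ u in (0 : ℝ)..t, -density lam α u = survival lam α t - survival lam α 0 :=
    intervalIntegral.integral_eq_sub_of_hasDerivAt_of_le ht
      (continuous_survival hα.le).continuousOn
      (fun x hx => hasDerivAt_survival hx.1.ne')
      (intervalIntegrable_density hα 0 t).neg
  rw [intervalIntegral.integral_neg] at hneg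
  linarith

end GRL

end

/-- The CDF of the GRL distribution. -/
theorem grl_cdf (lam α : ℝ) (hlam : 2 ≤ lam) (hα : 0 < α) (t : ℝ) (ht : 0 ≤ t) :
    ∫ u in (0 : ℝ)..t,
      (α / (lam * (lam - 1))) * u ^ (α - 1) * (lam + u ^ α / lam - 2) *
        Real.exp (-(u ^ α / lam))
      = 1 - (1 / (lam - 1)) * (lam - 1 + t ^ α / lam) * Real.exp (-(t ^ α / lam)) := by
  have hlam1 : lam ≠ 1 := by linarith
  have hftc := GRL.integral_density (lam := lam) hα ht
  rwa [GRL.survival_zero hlam1 hα.ne'] at hftc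
end

section
/- Proposition (mean): the mean of the GRL distribution is μ = ∫_{0}^{∞} t · f(t) dt = (λ^(1/α)/(α(λ−1))) · Γ(1/α) · (λ + 1/α − 1), where Γ denotes the Euler gamma function. -/
open Real MeasureTheory

lemma grl_integrableOn_aux {p q b : ℝ} (hp : 0 < p) (hq : -1 < q) (hb : 0 < b) :
    IntegrableOn (fun x : ℝ => x ^ q * Real.exp (-b * x ^ p)) (Set.Ioi 0) := by
  set s : ℝ := (q + 1) / p with hs_def
  have hs : 0 < s := div_pos (by linarith) hp
  have h1 : IntegrableOn (fun x : ℝ => Real.exp (-x) * x ^ (s - 1)) (Set.Ioi 0) :=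
    Real.GammaIntegral_convergent hs
  have h2 : IntegrableOn (fun x : ℝ => Real.exp (-(b * x)) * (b * x) ^ (s - 1))
      (Set.Ioi 0) := by
    have := (integrableOn_Ioi_comp_mul_left_iff
      (fun x : ℝ => Real.exp (-x) * x ^ (s - 1)) 0 hb).mpr
    simpa using this (by simpa using h1)
  have h3 : IntegrableOn (fun x : ℝ => x ^ (s - 1) * Real.exp (-b * x)) (Set.Ioi 0) := by
    refine MeasureTheory.IntegrableOn.congr_fun (h2.const_mul ((b : ℝ) ^ (s - 1))⁻¹)
      (fun x hx => ?_) measurableSet_Ioi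
    have hx0 : (0 : ℝ) < x := hx
    rw [Real.mul_rpow hb.le hx0.le]
    have hbne : (b : ℝ) ^ (s - 1) ≠ 0 := (Real.rpow_pos_of_pos hb _).ne'
    field_simp
  have h4 := (integrableOn_Ioi_comp_rpow_iff'
    (fun y : ℝ => y ^ (s - 1) * Real.exp (-b * y)) hp.ne').mpr h3
  refine MeasureTheory.IntegrableOn.congr_fun h4 (fun x hx => ?_) measurableSet_Ioi
  have hx0 : (0 : ℝ) < x := hx
  have h5 : ((x : ℝ) ^ p) ^ (s - 1) = x ^ (p * (s - 1)) := by
    rw [← Real.rpow_mul hx0.le]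
  show x ^ (p - 1) * ((x ^ p) ^ (s - 1) * Real.exp (-b * x ^ p))
      = x ^ q * Real.exp (-b * x ^ p)
  have hexp : p - 1 + p * (s - 1) = q := by
    rw [hs_def]; field_simp; try ring
  rw [h5, ← mul_assoc, ← Real.rpow_add hx0, hexp]

/-- The mean of the GRL distribution:
μ = (λ^(1/α)/(α(λ-1))) Γ(1/α) (λ + 1/α - 1). -/
theorem grl_mean (lam α : ℝ) (hlam : 2 ≤ lam) (hα : 0 < α) :
    ∫ t in Set.Ioi (0 : ℝ),
      t * ((α / (lam * (lam - 1))) * t ^ (α - 1) * (lam + t ^ α / lam - 2) *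
        Real.exp (-(t ^ α / lam)))
      = (lam ^ ((1 : ℝ) / α) / (α * (lam - 1))) * Real.Gamma (1 / α) *
          (lam + 1 / α - 1) := by
  have hlam0 : (0 : ℝ) < lam := by linarith
  have hlam1 : (0 : ℝ) < lam - 1 := by linarith
  have hb : (0 : ℝ) < lam⁻¹ := inv_pos.mpr hlam0
  set c : ℝ := α / (lam * (lam - 1)) with hc_def
  -- rewrite the integrand
  have hcongr : ∀ t ∈ Set.Ioi (0 : ℝ),
      t * (c * t ^ (α - 1) * (lam + t ^ α / lam - 2) * Real.exp (-(t ^ α / lam)))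
      = (c * (lam - 2)) * (t ^ α * Real.exp (-lam⁻¹ * t ^ α))
        + (c / lam) * (t ^ (2 * α) * Real.exp (-lam⁻¹ * t ^ α)) := by
    intro t ht
    have ht0 : (0 : ℝ) < t := ht
    have h1 : t * t ^ (α - 1) = t ^ α := by
      have h := Real.rpow_add ht0 1 (α - 1)
      simp only [Real.rpow_one] at h
      rw [← h]; congr 1; ring
    have h2 : t ^ α * t ^ α = t ^ (2 * α) := by
      rw [show 2 * α = α + α by ring, Real.rpow_add ht0]
    have he : -(t ^ α / lam) = -lam⁻¹ * t ^ α := by field_simp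
    rw [he, ← h2, ← h1]
    field_simp
    ring
  rw [setIntegral_congr_fun measurableSet_Ioi hcongr]
  have hqa : (-1 : ℝ) < α := by linarith
  have hq2a : (-1 : ℝ) < 2 * α := by linarith
  have hInt1 := (grl_integrableOn_aux hα hqa hb).const_mul (c * (lam - 2))
  have hInt2 := (grl_integrableOn_aux hα hq2a hb).const_mul (c / lam)
  rw [integral_add hInt1 hInt2, integral_const_mul, integral_const_mul,
    integral_rpow_mul_exp_neg_mul_rpow hα hqa hb,
    integral_rpow_mul_exp_neg_mul_rpow hα hq2a hb]
  -- simplify powers of lam⁻¹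
  have hαne : α ≠ 0 := hα.ne'
  have hr1 : (lam⁻¹ : ℝ) ^ (-(α + 1) / α) = lam ^ ((1 : ℝ) / α) * lam := by
    rw [Real.inv_rpow hlam0.le, ← Real.rpow_neg hlam0.le,
      show -(-(α + 1) / α) = 1 / α + 1 by field_simp; try ring,
      Real.rpow_add hlam0, Real.rpow_one]
  have hr2 : (lam⁻¹ : ℝ) ^ (-(2 * α + 1) / α) = lam ^ ((1 : ℝ) / α) * (lam * lam) := by
    rw [Real.inv_rpow hlam0.le, ← Real.rpow_neg hlam0.le,
      show -(-(2 * α + 1) / α) = 1 / α + 1 + 1 by field_simp; ring,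
      Real.rpow_add hlam0, Real.rpow_add hlam0, Real.rpow_one]
    ring
  have hg1 : Real.Gamma ((α + 1) / α) = (1 / α) * Real.Gamma (1 / α) := by
    rw [show (α + 1) / α = 1 / α + 1 by field_simp; try ring, Real.Gamma_add_one (by positivity)]
  have hg2 : Real.Gamma ((2 * α + 1) / α) = (1 / α + 1) * ((1 / α) * Real.Gamma (1 / α)) := by
    rw [show (2 * α + 1) / α = (1 / α + 1) + 1 by field_simp; ring,
      Real.Gamma_add_one (by positivity), Real.Gamma_add_one (by positivity)]
  rw [hr1, hr2, hg1, hg2, hc_def]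
  field_simp
  ring
end
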